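/- arXiv:1407.1643 — 3 statements merged into one kernel-verified Lean document; each statement's English description precedes it below -/
import Mathlib

section
/- Let k be a field of characteristic p > 0 and consider the Weyl algebra (ring of differential operators) on k[x]. For any integer a ≥ 1, the two-sided ideal generated by x^a equals the two-sided ideal generated by x. -/
/-!
The relation `∂^{(m+1)} x - x ∂^{(m+1)} = ∂^{(m)}` gives the Leibniz-type formula
`∂^{(n+k)} x^n = ∑ᵢ C(n,i) xⁱ ∂^{(i+k)}`. For `q = p^r` all the middle binomial coefficients
`C(q,i)` vanish in characteristic `p`, leaving `∂^{(q)} x^q - x^q ∂^{(q)} = 1`. Multiplying by `x`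
on the left writes `x` as an element of the ideal generated by `x^q`, which lies in the ideal
generated by `x^a` as soon as `q ≥ a`.
-/

open Finset

section DividedPowers

variable {A : Type*} [Ring A] {x : A} {D : ℕ → A}

theorem divPow_mul_pow_eq_sum (hDX : ∀ b, D (b + 1) * x - x * D (b + 1) = D b) (n k : ℕ) :
    D (n + k) * x ^ n = ∑ i ∈ range (n + 1), n.choose i • (x ^ i * D (i + k)) := by
  induction n generalizing k with
  | zero => simp
  | succ n ih =>
    have hDx : ∀ i, D (i + (k + 1)) * x = x * D (i + (k + 1)) + D (i + k) :=
      fun i ↦ eq_add_of_sub_eq' (hDX (i + k))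
    calc D (n + 1 + k) * x ^ (n + 1)
        = (D (n + (k + 1)) * x ^ n) * x := by
          rw [pow_succ, ← mul_assoc, Nat.add_right_comm n 1 k, add_assoc]
      _ = ∑ i ∈ range (n + 1), n.choose i • (x ^ i * D (i + k)) +
            ∑ i ∈ range (n + 1), n.choose i • (x ^ (i + 1) * D (i + 1 + k)) := by
        rw [ih, sum_mul, ← sum_add_distrib]
        refine sum_congr rfl fun i _ ↦ ?_
        rw [smul_mul_assoc, mul_assoc, hDx, mul_add, smul_add, add_comm, pow_succ, mul_assoc,
          Nat.add_right_comm i 1 k]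
        rfl
      _ = ∑ i ∈ range (n + 1 + 1), (n + 1).choose i • (x ^ i * D (i + k)) :=
        (sum_choose_succ_nsmul (fun i _ ↦ x ^ i * D (i + k)) n).symm

theorem divPow_prime_pow_mul_pow (hD0 : D 0 = 1)
    (hDX : ∀ b, D (b + 1) * x - x * D (b + 1) = D b)
    {p : ℕ} (hp : p.Prime) (hpA : (p : A) = 0) (r : ℕ) :
    D (p ^ r) * x ^ p ^ r = x ^ p ^ r * D (p ^ r) + 1 := by
  have hq : 0 < p ^ r := pow_pos hp.pos r
  have hmiddle : ∀ i ∈ range (p ^ r + 1), i ≠ p ^ r ∧ i ≠ 0 →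
      (p ^ r).choose i • (x ^ i * D i) = 0 := by
    rintro i - ⟨hiq, hi0⟩
    obtain ⟨t, ht⟩ := hp.dvd_choose_pow hi0 hiq
    rw [ht, nsmul_eq_mul, Nat.cast_mul, hpA, zero_mul, zero_mul]
  have hsum := divPow_mul_pow_eq_sum hDX (p ^ r) 0
  simp only [add_zero] at hsum
  rw [hsum, sum_eq_add (p ^ r) 0 hq.ne' hmiddle (by simp) (by simp)]
  simp [hD0]

end DividedPowers

namespace TwoSidedIdeal

variable {R : Type*} [Ring R]

theorem span_singleton_pow_le_of_le (x : R) {m n : ℕ} (h : m ≤ n) :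
    span {x ^ n} ≤ span {x ^ m} := by
  rw [span_le, Set.singleton_subset_iff, ← Nat.sub_add_cancel h, pow_add]
  exact mul_mem_left _ _ _ (subset_span rfl)

theorem mem_span_singleton_pow_of_mul_sub_mul_eq_one {x d : R} {n : ℕ}
    (h : d * x ^ n - x ^ n * d = 1) : x ∈ span {x ^ n} := by
  have hxn : x ^ n ∈ span {x ^ n} := subset_span rfl
  have hx : x * d * x ^ n - x * x ^ n * d = x := by
    rw [mul_assoc, mul_assoc, ← mul_sub, h, mul_one]
  have hmem : x * d * x ^ n - x * x ^ n * d ∈ span {x ^ n} :=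
    sub_mem _ (mul_mem_left _ _ _ hxn) (mul_mem_right _ _ _ (mul_mem_left _ _ _ hxn))
  rwa [hx] at hmem

end TwoSidedIdeal

theorem stmt13_general {k A : Type*} [Field k] (p : ℕ) [Fact p.Prime] [CharP k p]
    [Ring A] [Algebra k A] (x : A) (D : ℕ → A)
    (hD0 : D 0 = 1)
    (hDX : ∀ b, D (b + 1) * x - x * D (b + 1) = D b)
    (a : ℕ) (ha : 1 ≤ a) :
    TwoSidedIdeal.span ({x ^ a} : Set A) = TwoSidedIdeal.span ({x} : Set A) := by
  have hp : p.Prime := Fact.out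
  have hpA : (p : A) = 0 := by rw [← map_natCast (algebraMap k A), CharP.cast_eq_zero, map_zero]
  have hcomm : D (p ^ a) * x ^ p ^ a - x ^ p ^ a * D (p ^ a) = 1 := by
    rw [divPow_prime_pow_mul_pow hD0 hDX hp hpA, add_sub_cancel_left]
  refine le_antisymm (by simpa using TwoSidedIdeal.span_singleton_pow_le_of_le x ha) ?_
  rw [TwoSidedIdeal.span_le, Set.singleton_subset_iff]
  exact TwoSidedIdeal.span_singleton_pow_le_of_le x (Nat.lt_pow_self hp.one_lt).le
    (TwoSidedIdeal.mem_span_singleton_pow_of_mul_sub_mul_eq_one hcomm)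

/-- In the ring of differential operators on `k[x]` for `k` a field of characteristic `p > 0`
(any `k`-algebra with an element `x` and divided power operators `D m` satisfying the defining
relations), for any `a ≥ 1` the two-sided ideal generated by `x^a` equals the two-sided ideal
generated by `x`. -/
theorem stmt13 {k A : Type*} [Field k] (p : ℕ) [Fact p.Prime] [CharP k p]
    [Ring A] [Algebra k A] (x : A) (D : ℕ → A)
    (hD0 : D 0 = 1)
    (hDmul : ∀ a b, D a * D b = Nat.choose (a + b) a • D (a + b))
    (hDX : ∀ b, D (b + 1) * x - x * D (b + 1) = D b)
    (a : ℕ) (ha : 1 ≤ a) :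
    TwoSidedIdeal.span ({x ^ a} : Set A) = TwoSidedIdeal.span ({x} : Set A) :=
  stmt13_general (k := k) p x D hD0 hDX a ha
end

section
/- Let K be a finite simplicial complex on n vertices over a field k of characteristic p > 0, let R = R_K be its face ring with homogeneous maximal ideal m = (x_1,…,x_n), and let q = p^r. Then the Hilbert–Kunz function satisfies HK_R(q) = length(R/m^{[q]}) = Σ_{i=−1}^{dim K} f_i (q−1)^{i+1}, where f_i is the number of i-dimensional faces of K (with f_{−1} = 1 counting the empty face) and m^{[q]} = (x_1^q,…,x_n^q). -/
/-!
Modulo `I_K + m^[q]` every polynomial reduces to its standard monomials `x^e`: those with all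
`e i < q` whose support is a face (any other monomial is divisible by some `x_i^q` or by the
squarefree monomial of a non-face). As a monomial ideal, `I_K + m^[q]` is spanned over `k` by the
monomials it contains, which are exactly the non-standard ones, so the standard monomials form a
`k`-basis of the quotient. Grouping them by their support `σ`, each face contributes the
`(q - 1) ^ #σ` exponent vectors with entries in `[1, q - 1]` on `σ`.
-/

open MvPolynomial

/-- The Stanley–Reisner ideal of a finite simplicial complex `L` on vertices `Fin n`. -/
noncomputable def SRIdeal (k : Type*) [Field k] (n : ℕ)
    (L : Finset (Finset (Fin n))) : Ideal (MvPolynomial (Fin n) k) :=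
  Ideal.span {f | ∃ S : Finset (Fin n), S ∉ L ∧ f = ∏ i ∈ S, X i}

/-- The face ring `R_K = k[x_1,…,x_n]/I_K`. -/
noncomputable abbrev FaceRing (k : Type*) [Field k] (n : ℕ)
    (L : Finset (Finset (Fin n))) : Type _ :=
  MvPolynomial (Fin n) k ⧸ SRIdeal k n L


open Finset

namespace MvPolynomial

variable {σ R : Type*}

theorem isCompl_restrictSupport_compl [CommSemiring R] (s : Set (σ →₀ ℕ)) :
    IsCompl (restrictSupport R sᶜ) (restrictSupport R s) :=
  (Submodule.orderIsoMapComap (AddMonoidAlgebra.coeffLinearEquiv R)).symm.isCompl_iff.mp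
    ⟨Finsupp.disjoint_supported_supported isCompl_compl.symm.disjoint,
      Finsupp.codisjoint_supported_supported isCompl_compl.symm.codisjoint⟩

theorem finrank_quotient_eq_card [CommRing R] [Nontrivial R]
    (J : Ideal (MvPolynomial σ R)) (B : Finset (σ →₀ ℕ))
    (hJ : J.restrictScalars R = restrictSupport R (B : Set (σ →₀ ℕ))ᶜ) :
    Module.finrank R (MvPolynomial σ R ⧸ J) = #B := by
  rw [← (Submodule.Quotient.restrictScalarsEquiv R J).finrank_eq, hJ,
    (Submodule.quotientEquivOfIsCompl _ _ (isCompl_restrictSupport_compl _)).finrank_eq,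
    Module.finrank_eq_card_basis (basisRestrictSupport R _)]
  simp

theorem prod_X_eq_monomial [CommSemiring R] (T : Finset σ) :
    ∏ i ∈ T, (X i : MvPolynomial σ R) = monomial (∑ i ∈ T, Finsupp.single i 1) 1 := by
  rw [monomial_sum_one]
  exact prod_congr rfl fun i _ => by rw [← X_pow_eq_monomial, pow_one]

end MvPolynomial

theorem Finsupp.sum_single_one_le_iff {ι : Type*} [DecidableEq ι] (T : Finset ι) (e : ι →₀ ℕ) :
    ∑ i ∈ T, single i 1 ≤ e ↔ T ⊆ e.support := by
  simp only [le_def, finsetSum_apply, single_apply, Finset.sum_ite_eq', Finset.subset_iff,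
    mem_support_iff]
  refine forall_congr' fun i => ?_
  split_ifs <;> simp [*, Nat.one_le_iff_ne_zero]

theorem Finset.sum_comp_card_eq_sum_range {ι M : Type*} [AddCommMonoid M]
    (K : Finset (Finset ι)) (f : ℕ → M) {m : ℕ} (hK : ∀ σ ∈ K, #σ < m) :
    ∑ σ ∈ K, f #σ = ∑ j ∈ range m, #{σ ∈ K | #σ = j} • f j := by
  rw [← sum_fiberwise_of_maps_to (fun σ hσ => mem_range.mpr (hK σ hσ))]
  refine sum_congr rfl fun j _ => ?_
  rw [← sum_const]
  exact sum_congr rfl fun σ hσ => by rw [(mem_filter.mp hσ).2]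

theorem support_eq_of_mem_finsupp_Ioo {ι : Type*} {q : ℕ} {σ : Finset ι} {e : ι →₀ ℕ}
    (he : e ∈ σ.finsupp fun _ => Ioo 0 q) : e.support = σ := by
  rw [mem_finsupp_iff] at he
  refine he.1.antisymm fun i hi => Finsupp.mem_support_iff.mpr ?_
  exact (mem_Ioo.mp (he.2 i hi)).1.ne'

section StandardMonomials

variable {ι : Type*} [DecidableEq ι]

noncomputable def standardMonomials (q : ℕ) (K : Finset (Finset ι)) : Finset (ι →₀ ℕ) :=
  K.biUnion fun σ => σ.finsupp fun _ => Ioo 0 q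

theorem mem_standardMonomials {q : ℕ} (hq : q ≠ 0) {K : Finset (Finset ι)} {e : ι →₀ ℕ} :
    e ∈ standardMonomials q K ↔ e.support ∈ K ∧ ∀ i, e i < q := by
  simp only [standardMonomials, mem_biUnion]
  constructor
  · rintro ⟨σ, hσ, he⟩
    refine ⟨support_eq_of_mem_finsupp_Ioo he ▸ hσ, fun i => ?_⟩
    by_cases hi : i ∈ σ
    · exact (mem_Ioo.mp ((mem_finsupp_iff.mp he).2 i hi)).2
    · rw [← support_eq_of_mem_finsupp_Ioo he, Finsupp.notMem_support_iff] at hi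
      omega
  · rintro ⟨hK, hq⟩
    refine ⟨e.support, hK, mem_finsupp_iff.mpr ⟨subset_rfl, fun i hi => ?_⟩⟩
    exact mem_Ioo.mpr ⟨Nat.pos_of_ne_zero (Finsupp.mem_support_iff.mp hi), hq i⟩

theorem card_standardMonomials (q : ℕ) (K : Finset (Finset ι)) :
    #(standardMonomials q K) = ∑ σ ∈ K, (q - 1) ^ #σ := by
  rw [standardMonomials, card_biUnion]
  · simp
  · intro σ _ τ _ hστ
    refine disjoint_left.mpr fun e hσ hτ => hστ ?_
    rw [← support_eq_of_mem_finsupp_Ioo hσ, support_eq_of_mem_finsupp_Ioo hτ]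

end StandardMonomials

theorem exists_le_iff_notMem_standardMonomials {ι : Type*} [DecidableEq ι] {q : ℕ} (hq : q ≠ 0)
    {K : Finset (Finset ι)} (hK : ∀ σ ∈ K, ∀ τ : Finset ι, τ ⊆ σ → τ ∈ K) (e : ι →₀ ℕ) :
    (∃ s ∈ (fun T => ∑ i ∈ T, Finsupp.single i 1) '' {T | T ∉ K} ∪
        Set.range fun i => Finsupp.single i q, s ≤ e) ↔
      e ∉ standardMonomials q K := by
  simp only [Set.mem_union, Set.mem_image, Set.mem_ofPred_eq, Set.mem_range, or_and_right,
    exists_or, exists_exists_and_eq_and, exists_exists_eq_and, Finsupp.sum_single_one_le_iff,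
    Finsupp.single_le_iff, mem_standardMonomials hq, not_and_or, not_forall, not_lt]
  refine or_congr_left ⟨fun ⟨T, hT, hTe⟩ he => hT (hK _ he T hTe), fun he => ⟨_, he, subset_rfl⟩⟩

section FaceRing

variable {k : Type*} [Field k] {n : ℕ}

theorem SRIdeal_eq_span_monomial (K : Finset (Finset (Fin n))) :
    SRIdeal k n K = Ideal.span ((monomial · 1) ''
      ((fun T => ∑ i ∈ T, Finsupp.single i 1) '' {T | T ∉ K})) := by
  rw [SRIdeal, Set.image_image]
  congr 1
  ext f
  simp [prod_X_eq_monomial, eq_comm]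

theorem span_X_pow_eq_span_monomial (q : ℕ) :
    Ideal.span {f : MvPolynomial (Fin n) k | ∃ i, f = X i ^ q} =
      Ideal.span ((monomial · 1) '' Set.range fun i => Finsupp.single i q) := by
  rw [← Set.range_comp]
  congr 1
  ext f
  simp [X_pow_eq_monomial, eq_comm]

theorem restrictScalars_SRIdeal_sup_span_X_pow {q : ℕ} (hq : q ≠ 0) {K : Finset (Finset (Fin n))}
    (hK : ∀ σ ∈ K, ∀ τ : Finset (Fin n), τ ⊆ σ → τ ∈ K) :
    (SRIdeal k n K ⊔ Ideal.span {f | ∃ i, f = X i ^ q}).restrictScalars k =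
      restrictSupport k (standardMonomials q K : Set (Fin n →₀ ℕ))ᶜ := by
  ext f
  rw [SRIdeal_eq_span_monomial, span_X_pow_eq_span_monomial, ← Ideal.span_union,
    ← Set.image_union, Submodule.restrictScalars_mem, mem_ideal_span_monomial_image,
    mem_restrictSupport_iff]
  simp only [exists_le_iff_notMem_standardMonomials hq hK, Set.subset_def, Finset.mem_coe,
    Set.mem_compl_iff]

theorem span_mk_X_pow_eq_map (K : Finset (Finset (Fin n))) (q : ℕ) :
    Ideal.span {f : FaceRing k n K | ∃ i, f = Ideal.Quotient.mk (SRIdeal k n K) (X i ^ q)} =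
      (Ideal.span {f | ∃ i, f = X i ^ q}).map (Ideal.Quotient.mkₐ k (SRIdeal k n K)) := by
  rw [Ideal.map_span]
  congr 1
  ext f
  simp [eq_comm]

end FaceRing

theorem stmt14_general (k : Type*) [Field k] (p : ℕ) [Fact p.Prime]
    (r q : ℕ) (hq : q = p ^ r) (n : ℕ) (K : Finset (Finset (Fin n)))
    (hK : ∀ σ ∈ K, ∀ τ : Finset (Fin n), τ ⊆ σ → τ ∈ K)
    (d : ℕ) (hd : ∀ σ ∈ K, σ.card ≤ d + 1) :
    Module.finrank k ((FaceRing k n K) ⧸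
        Ideal.span {f : FaceRing k n K | ∃ i : Fin n,
          f = Ideal.Quotient.mk (SRIdeal k n K) (X i ^ q)}) =
      ∑ j ∈ Finset.range (d + 2),
        (K.filter (fun σ => σ.card = j)).card * (q - 1) ^ j := by
  have hq0 : q ≠ 0 := hq ▸ pow_ne_zero r (Fact.out : p.Prime).ne_zero
  rw [span_mk_X_pow_eq_map, (DoubleQuot.quotQuotEquivQuotSupₐ k _ _).toLinearEquiv.finrank_eq,
    finrank_quotient_eq_card _ _ (restrictScalars_SRIdeal_sup_span_X_pow hq0 hK),
    card_standardMonomials, sum_comp_card_eq_sum_range K (fun j => (q - 1) ^ j)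
      fun σ hσ => Nat.lt_succ_of_le (hd σ hσ)]
  simp_rw [smul_eq_mul]

/-- The Hilbert–Kunz function of a face ring: for `q = p^r`,
`HK_R(q) = length(R/m^{[q]}) = Σ_{i=-1}^{dim K} f_i (q-1)^{i+1}` (the summand for
`j = i + 1` counts the `i`-dimensional faces, `f_{-1} = 1` counting the empty face). -/
theorem stmt14 (k : Type*) [Field k] (p : ℕ) [Fact p.Prime] [CharP k p]
    (r q : ℕ) (hq : q = p ^ r) (n : ℕ) (K : Finset (Finset (Fin n)))
    (hK : ∀ σ ∈ K, ∀ τ : Finset (Fin n), τ ⊆ σ → τ ∈ K) (h0 : ∅ ∈ K)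
    (d : ℕ) (hd : ∀ σ ∈ K, σ.card ≤ d + 1) :
    Module.finrank k ((FaceRing k n K) ⧸
        Ideal.span {f : FaceRing k n K | ∃ i : Fin n,
          f = Ideal.Quotient.mk (SRIdeal k n K) (X i ^ q)}) =
      ∑ j ∈ Finset.range (d + 2),
        (K.filter (fun σ => σ.card = j)).card * (q - 1) ^ j :=
  stmt14_general k p r q hq n K hK d hd
end

section
/- Let K be a finite simplicial complex and τ ∈ K a face. Then the intersection, over all faces σ ∈ K such that τ ∪ σ ∉ K, of the sets U_σ := {α ∈ K | α ∪ σ ∉ K}, equals the set {α ∈ K | st(α,K) ⊆ st(τ,K)}. -/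
/-- The closed star of a face `σ` in a simplicial complex `K`. -/
def closedStar {V : Type*} [DecidableEq V] (K : Finset (Finset V)) (σ : Finset V) :
    Set (Finset V) := {τ | τ ∈ K ∧ τ ∪ σ ∈ K}

/-- The open complement `U_σ = K \ st(σ,K)` of the closed star of `σ`. -/
def openComplement {V : Type*} [DecidableEq V] (K : Finset (Finset V)) (σ : Finset V) :
    Set (Finset V) := {α | α ∈ K ∧ α ∪ σ ∉ K}

/-- The intersection (within `K`), over all faces `σ ∈ K` with `τ ∪ σ ∉ K`, of the sets
`U_σ`, equals `{α ∈ K | st(α,K) ⊆ st(τ,K)}`. -/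
theorem stmt18 {V : Type*} [DecidableEq V] (K : Finset (Finset V))
    (hK : ∀ σ ∈ K, ∀ τ : Finset V, τ ⊆ σ → τ ∈ K)
    (τ : Finset V) (hτ : τ ∈ K) :
    (K : Set (Finset V)) ∩
        (⋂ σ ∈ {σ : Finset V | σ ∈ K ∧ τ ∪ σ ∉ K}, openComplement K σ) =
      {α | α ∈ K ∧ closedStar K α ⊆ closedStar K τ} := by
  ext α
  simp only [Set.mem_inter_iff, Set.mem_iInter, Set.mem_setOf_eq, openComplement,
    closedStar, Finset.mem_coe]
  constructor
  · rintro ⟨hα, h⟩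
    refine ⟨hα, fun β ⟨hβ, hβα⟩ => ⟨hβ, ?_⟩⟩
    by_contra hβτ
    exact (h β ⟨hβ, by rwa [Finset.union_comm]⟩).2 (by rwa [Finset.union_comm])
  · rintro ⟨hα, h⟩
    refine ⟨hα, fun σ ⟨hσ, hτσ⟩ => ⟨hα, fun hασ => ?_⟩⟩
    exact hτσ (by rw [Finset.union_comm]; exact (h ⟨hσ, by rwa [Finset.union_comm]⟩).2)
end
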